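/- arXiv:1503.07495 — 3 statements merged into one kernel-verified Lean document; each statement's English description precedes it below -/
import Mathlib

section
/- For 0 < |q| < 1/√2, the cumulative distribution function F(x) = ∫_{-∞}^{x} pdf(p) dp, with pdf(p) = e^{-p²}(2p² + 2q² - 1)/(2√π q²), is not monotone nondecreasing on ℝ: there exist x₁ < x₂ with F(x₁) > F(x₂). -/
noncomputable def pdf (q p : ℝ) : ℝ :=
  Real.exp (-p^2) * (2*p^2 + 2*q^2 - 1) / (2 * Real.sqrt Real.pi * q^2)

noncomputable def F (q x : ℝ) : ℝ := ∫ p in Set.Iic x, pdf q p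

/-!
The density is negative exactly where `p² < 1/2 - q²`, a nonempty interval around `0` as soon as
`q² < 1/2`. Integrating a negative function over `(0, √(1/2 - q²))` makes `F` drop there.
-/

open Real Set
open MeasureTheory (Integrable setIntegral_union)

lemma pdf_integrable (q : ℝ) : Integrable (pdf q) := by
  have h_sq : Integrable (fun p : ℝ => p ^ 2 * rexp (-1 * p ^ 2)) := by
    refine (integrable_rpow_mul_exp_neg_mul_sq (b := 1) one_pos (s := 2) (by norm_num)).congr
      (Filter.Eventually.of_forall fun p => ?_)
    simp only [← Real.rpow_natCast, Nat.cast_ofNat]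
  have h_exp : Integrable (fun p : ℝ => rexp (-1 * p ^ 2)) :=
    integrable_exp_neg_mul_sq one_pos
  refine (((h_sq.const_mul 2).add (h_exp.const_mul (2 * q ^ 2 - 1))).div_const
    (2 * √π * q ^ 2)).congr (Filter.Eventually.of_forall fun p => ?_)
  simp only [pdf, Pi.add_apply, neg_one_mul]
  ring

lemma pdf_neg {q p : ℝ} (hq : q ≠ 0) (hp : p ^ 2 < 1 / 2 - q ^ 2) : pdf q p < 0 := by
  have hden : 0 < 2 * √π * q ^ 2 := by positivity
  exact div_neg_of_neg_of_pos (mul_neg_of_pos_of_neg (exp_pos _) (by linarith)) hden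

lemma F_eq_add_intervalIntegral (q : ℝ) {a b : ℝ} (hab : a ≤ b) :
    F q b = F q a + ∫ p in a..b, pdf q p := by
  rw [F, F, intervalIntegral.integral_of_le hab, ← setIntegral_union (Iic_disjoint_Ioc le_rfl)
    measurableSet_Ioc (pdf_integrable q).integrableOn (pdf_integrable q).integrableOn,
    Iic_union_Ioc_eq_Iic hab]

lemma F_lt_of_pdf_neg {q a b : ℝ} (hab : a < b) (hneg : ∀ p ∈ Ioo a b, pdf q p < 0) :
    F q b < F q a := by
  have hpos : 0 < ∫ p in a..b, -pdf q p :=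
    intervalIntegral.intervalIntegral_pos_of_pos_on
      (pdf_integrable q).neg.intervalIntegrable (fun p hp => neg_pos.2 (hneg p hp)) hab
  rw [intervalIntegral.integral_neg] at hpos
  linarith [F_eq_add_intervalIntegral q hab.le]

theorem stmt_6 (q : ℝ) (hq : q ≠ 0) (hq' : |q| < 1 / Real.sqrt 2) :
    ∃ x₁ x₂ : ℝ, x₁ < x₂ ∧ F q x₁ > F q x₂ := by
  have hq2 : q ^ 2 < 1 / 2 := by
    have h := sq_lt_sq.2 (hq'.trans_eq (abs_of_pos (by positivity)).symm)
    rwa [div_pow, sq_sqrt zero_le_two, one_pow] at h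
  set r := √(1 / 2 - q ^ 2)
  have hr : 0 < r := sqrt_pos.2 (by linarith)
  refine ⟨0, r, hr, F_lt_of_pdf_neg hr fun p hp => pdf_neg hq ?_⟩
  calc p ^ 2 < r ^ 2 := pow_lt_pow_left₀ hp.2 hp.1.le two_ne_zero
    _ = 1 / 2 - q ^ 2 := sq_sqrt (by linarith)
end

section
/- Let pdf : ℝ → ℝ be a continuous probability density (pdf ≥ 0, ∫_ℝ pdf = 1) with finite first absolute moment, ∫_ℝ p·pdf(p) dp = 0, and pdf > 0 on a neighborhood of 0. Define ρ(a) = (-∫_{-∞}^{-a} p·pdf(p) dp)/(1 + ∫_{-∞}^{-a} pdf(p) dp). Then ρ has a unique fixed point a* with ρ(a*) = a*, and a* > 0. -/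
open MeasureTheory Set

theorem stmt_11 (pdf : ℝ → ℝ) (hc : Continuous pdf)
    (hnn : ∀ p, 0 ≤ pdf p)
    (hi : MeasureTheory.Integrable pdf)
    (h1 : ∫ p : ℝ, pdf p = 1)
    (hm : MeasureTheory.Integrable (fun p => |p| * pdf p))
    (h0 : ∫ p : ℝ, p * pdf p = 0)
    (hpos : ∃ ε > 0, ∀ p : ℝ, |p| < ε → 0 < pdf p)
    (ρ : ℝ → ℝ)
    (hρ : ∀ a, ρ a = (-∫ p in Set.Iic (-a), p * pdf p) /
        (1 + ∫ p in Set.Iic (-a), pdf p)) :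
    (∃! a : ℝ, ρ a = a) ∧ (∀ a : ℝ, ρ a = a → 0 < a) := by
  obtain ⟨ε, hε, hεp⟩ := hpos
  set m : ℝ → ℝ := fun p => p * pdf p with hm_def
  have hmc : Continuous m := continuous_id.mul hc
  have hmabs : (fun p => |p| * pdf p) = fun p => |m p| := by
    funext p
    simp [hm_def, abs_mul, abs_of_nonneg (hnn p)]
  have hmi : Integrable m := by
    rw [← integrable_norm_iff hmc.aestronglyMeasurable]
    simpa [Real.norm_eq_abs, ← hmabs] using hm
  set F : ℝ → ℝ := fun b => ∫ p in Iic b, pdf p with hF_def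
  set M : ℝ → ℝ := fun b => ∫ p in Iic b, m p with hM_def
  have hρ' : ∀ a, ρ a = (-M (-a)) / (1 + F (-a)) := fun a => hρ a
  have hF0 : ∀ b, 0 ≤ F b := fun b =>
    setIntegral_nonneg measurableSet_Iic fun x _ => hnn x
  have hden : ∀ a, 0 < 1 + F (-a) := fun a => by linarith [hF0 (-a)]
  -- continuity
  have hFcont : Continuous F := by
    have h := hi.continuous_primitive 0
    have heq : F = fun b => (∫ x in (0:ℝ)..b, pdf x) + F 0 := by
      funext b
      rw [← intervalIntegral.integral_Iic_sub_Iic hi.integrableOn hi.integrableOn]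
      ring
    rw [heq]
    exact h.add continuous_const
  have hMcont : Continuous M := by
    have h := hmi.continuous_primitive 0
    have heq : M = fun b => (∫ x in (0:ℝ)..b, m x) + M 0 := by
      funext b
      rw [← intervalIntegral.integral_Iic_sub_Iic hmi.integrableOn hmi.integrableOn]
      ring
    rw [heq]
    exact h.add continuous_const
  set g : ℝ → ℝ := fun a => a * (1 + F (-a)) + M (-a) with hg_def
  have hfix : ∀ a, ρ a = a ↔ g a = 0 := by
    intro a
    rw [hρ' a, div_eq_iff (hden a).ne', hg_def]
    constructor <;> intro h <;> simp only at * <;> linarith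
  -- strict monotonicity of g
  have hgmono : StrictMono g := by
    intro a b hab
    have hAB : (-b : ℝ) < -a := by linarith
    have key : ∀ f : ℝ → ℝ, Integrable f →
        (∫ p in Iic (-a), f p) = (∫ p in Iic (-b), f p) + ∫ p in Ioc (-b) (-a), f p := by
      intro f hf
      rw [← Set.Iic_union_Ioc_eq_Iic hAB.le,
        setIntegral_union (Set.Iic_disjoint_Ioc le_rfl) measurableSet_Ioc
          hf.integrableOn hf.integrableOn]
    set I : ℝ := ∫ p in Ioc (-b) (-a), pdf p with hI_def
    set J : ℝ := ∫ p in Ioc (-b) (-a), m p with hJ_def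
    have hFs : F (-a) = F (-b) + I := key pdf hi
    have hMs : M (-a) = M (-b) + J := key m hmi
    have hsum : J + a * I ≤ 0 := by
      have heq : (∫ p in Ioc (-b) (-a), (m p + a * pdf p)) = J + a * I := by
        rw [integral_add hmi.integrableOn ((hi.const_mul a).integrableOn)]
        rw [integral_const_mul]
      have hle : (∫ p in Ioc (-b) (-a), (m p + a * pdf p)) ≤ 0 := by
        apply setIntegral_nonpos measurableSet_Ioc
        intro x hx
        have hx2 : x ≤ -a := hx.2
        have := hnn x
        simp only [hm_def]
        nlinarith
      linarith
    have hFb := hF0 (-b)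
    simp only [hg_def]
    rw [hFs, hMs]
    nlinarith [mul_pos (sub_pos.mpr hab) (hden b)]
  -- bounds for existence
  set C : ℝ := ∫ p : ℝ, |p| * pdf p with hC_def
  have hC0 : 0 ≤ C := integral_nonneg fun p => mul_nonneg (abs_nonneg p) (hnn p)
  have hMbound : ∀ b, |M b| ≤ C := by
    intro b
    calc |M b| ≤ ∫ p in Iic b, |m p| := by
          simpa [Real.norm_eq_abs] using
            norm_integral_le_integral_norm (μ := volume.restrict (Iic b)) m
      _ = ∫ p in Iic b, |p| * pdf p := by
          refine setIntegral_congr_fun measurableSet_Iic fun x _ => ?_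
          simp [hm_def, abs_mul, abs_of_nonneg (hnn x)]
      _ ≤ C := setIntegral_le_integral hm
          (Filter.Eventually.of_forall fun x => mul_nonneg (abs_nonneg x) (hnn x))
  have hglo : g (-(C + 1)) < 0 := by
    have h1' := hMbound (-(-(C + 1)))
    have h2' := hF0 (-(-(C + 1)))
    have habs := abs_le.mp h1'
    have hneg : (-(C + 1)) * F (-(-(C + 1))) ≤ 0 :=
      mul_nonpos_of_nonpos_of_nonneg (by linarith) h2'
    simp only [hg_def]
    nlinarith
  have hghi : 0 < g (C + 1) := by
    have h1' := hMbound (-(C + 1))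
    have h2' := hF0 (-(C + 1))
    have habs := abs_le.mp h1'
    have hpos' : 0 ≤ (C + 1) * F (-(C + 1)) := mul_nonneg (by linarith) h2'
    simp only [hg_def]
    nlinarith
  -- existence of root
  have hgcont : Continuous g :=
    (continuous_id.mul (continuous_const.add (hFcont.comp continuous_neg))).add
      (hMcont.comp continuous_neg)
  obtain ⟨r, _, hr⟩ : ∃ r ∈ Icc (-(C+1)) (C+1), g r = 0 := by
    have hsub := intermediate_value_Icc (by linarith : (-(C+1) : ℝ) ≤ C + 1)
      hgcont.continuousOn
    have h0m : (0:ℝ) ∈ Icc (g (-(C+1))) (g (C+1)) := ⟨hglo.le, hghi.le⟩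
    obtain ⟨r, hr1, hr2⟩ := hsub h0m
    exact ⟨r, hr1, hr2⟩
  -- g 0 < 0
  have hg0 : g 0 < 0 := by
    have hab : (-(ε/2) : ℝ) < -(ε/4) := by linarith
    have hIoc : (0:ℝ) < ∫ x in (-(ε/2))..(-(ε/4)), -(m x) := by
      apply intervalIntegral.intervalIntegral_pos_of_pos_on
        hmi.neg.intervalIntegrable _ hab
      intro x hx
      have hx1 := hx.1
      have hx2 := hx.2
      have hxe : |x| < ε := by rw [abs_of_neg (by linarith)]; linarith
      have := hεp x hxe
      simp only [Pi.neg_apply, hm_def]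
      nlinarith [mul_pos (show (0:ℝ) < -x by linarith) this]
    rw [intervalIntegral.integral_neg] at hIoc
    rw [intervalIntegral.integral_of_le hab.le] at hIoc
    have hJneg : (∫ x in Ioc (-(ε/2)) (-(ε/4)), m x) < 0 := by linarith
    have hmono : (∫ x in Ioc (-(ε/2)) (-(ε/4)), -(m x)) ≤ ∫ x in Iic 0, -(m x) := by
      apply setIntegral_mono_set hmi.neg.integrableOn
      · rw [Filter.EventuallyLE, ae_restrict_iff' measurableSet_Iic]
        filter_upwards with x hx
        have := hnn x
        have hx0 : x ≤ 0 := hx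
        simp only [Pi.neg_apply, Pi.zero_apply, hm_def]
        nlinarith [mul_nonneg (show (0:ℝ) ≤ -x by linarith) this]
      · exact Filter.Eventually.of_forall fun x hx => le_trans hx.2 (by linarith)
    rw [integral_neg, integral_neg] at hmono
    have hM0 : M 0 < 0 := by
      simp only [hM_def]
      linarith
    simp only [hg_def]
    rw [neg_zero, zero_mul, zero_add]
    exact hM0
  constructor
  · refine ⟨r, (hfix r).mpr hr, fun y hy => ?_⟩
    exact hgmono.injective (((hfix y).mp hy).trans hr.symm)
  · intro a ha
    have hga := (hfix a).mp ha
    by_contra h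
    push_neg at h
    have := hgmono.monotone h
    rw [hga] at this
    linarith
end

section
/- Let pdf : ℝ → ℝ be a continuous probability density (pdf ≥ 0, ∫_ℝ pdf = 1) with finite first absolute moment and ∫_ℝ p·pdf(p) dp = 0, and suppose pdf > 0 near 0. Define ρ(a) = (-∫_{-∞}^{-a} p·pdf(p) dp)/(1 + ∫_{-∞}^{-a} pdf(p) dp) and let a* be its fixed point. Then ρ(a) ≤ a* = ρ(a*) for all a ∈ ℝ, i.e. the fixed point is the global maximum of ρ. -/
open MeasureTheory

theorem stmt_12 (pdf : ℝ → ℝ) (hc : Continuous pdf)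
    (hnn : ∀ p, 0 ≤ pdf p)
    (hi : MeasureTheory.Integrable pdf)
    (h1 : ∫ p : ℝ, pdf p = 1)
    (hm : MeasureTheory.Integrable (fun p => |p| * pdf p))
    (h0 : ∫ p : ℝ, p * pdf p = 0)
    (hpos : ∃ ε > 0, ∀ p : ℝ, |p| < ε → 0 < pdf p)
    (ρ : ℝ → ℝ)
    (hρ : ∀ a, ρ a = (-∫ p in Set.Iic (-a), p * pdf p) /
        (1 + ∫ p in Set.Iic (-a), pdf p))
    (astar : ℝ) (hfix : ρ astar = astar) :
    ∀ a : ℝ, ρ a ≤ astar := by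
  have hppdf : MeasureTheory.Integrable (fun p : ℝ => p * pdf p) := by
    refine hm.mono' (continuous_id.mul hc).aestronglyMeasurable ?_
    filter_upwards with p
    rw [Real.norm_eq_abs, abs_mul, abs_of_nonneg (hnn p)]
  set f : ℝ → ℝ := fun p => (-p - astar) * pdf p with hfdef
  have hf : MeasureTheory.Integrable f := by
    have h := hppdf.neg.sub (hi.const_mul astar)
    convert h using 1
    funext p; simp [hfdef]; ring
  have hD : ∀ a : ℝ, 0 < 1 + ∫ p in Set.Iic (-a), pdf p := by
    intro a
    have : 0 ≤ ∫ p in Set.Iic (-a), pdf p :=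
      setIntegral_nonneg measurableSet_Iic fun p _ => hnn p
    linarith
  have hlin : ∀ a : ℝ, ∫ p in Set.Iic (-a), f p =
      (-∫ p in Set.Iic (-a), p * pdf p) - astar * ∫ p in Set.Iic (-a), pdf p := by
    intro a
    have : ∀ p : ℝ, f p = -(p * pdf p) - astar * pdf p := fun p => by
      simp [hfdef]; ring
    calc ∫ p in Set.Iic (-a), f p
        = ∫ p in Set.Iic (-a), (-(p * pdf p) - astar * pdf p) := by
          exact integral_congr_ae (Filter.Eventually.of_forall fun p => this p)
      _ = (∫ p in Set.Iic (-a), -(p * pdf p)) - ∫ p in Set.Iic (-a), astar * pdf p := by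
          exact integral_sub hppdf.neg.integrableOn (hi.const_mul astar).integrableOn
      _ = (-∫ p in Set.Iic (-a), p * pdf p) - astar * ∫ p in Set.Iic (-a), pdf p := by
          rw [integral_neg, MeasureTheory.integral_const_mul]
  -- key monotonicity
  have key : ∀ a : ℝ, (∫ p in Set.Iic (-a), f p) ≤ ∫ p in Set.Iic (-astar), f p := by
    intro a
    have hsplit := integral_inter_add_diff (μ := MeasureTheory.volume)
      (s := Set.Iic (-a)) (t := Set.Iic (-astar)) (f := f)
      measurableSet_Iic hf.integrableOn
    have hdiff : (∫ p in Set.Iic (-a) \ Set.Iic (-astar), f p) ≤ 0 := by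
      refine setIntegral_nonpos (measurableSet_Iic.diff measurableSet_Iic) ?_
      intro p hp
      have : -astar < p := not_le.mp (by simpa using hp.2)
      exact mul_nonpos_of_nonpos_of_nonneg (by linarith) (hnn p)
    have hinter : (∫ p in Set.Iic (-a) ∩ Set.Iic (-astar), f p)
        ≤ ∫ p in Set.Iic (-astar), f p := by
      refine setIntegral_mono_set hf.integrableOn ?_
        (Filter.Eventually.of_forall fun p hp => hp.2)
      refine (MeasureTheory.ae_restrict_iff' measurableSet_Iic).mpr
        (Filter.Eventually.of_forall fun p hp => ?_)
      have : p ≤ -astar := hp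
      exact mul_nonneg (by linarith) (hnn p)
    linarith
  -- fixed point value
  have hfixval : (∫ p in Set.Iic (-astar), f p) = astar := by
    have h := hρ astar
    rw [hfix] at h
    have hD' := hD astar
    have : -∫ p in Set.Iic (-astar), p * pdf p
        = astar * (1 + ∫ p in Set.Iic (-astar), pdf p) := by
      field_simp at h
      linarith [h]
    rw [hlin astar]
    linarith [this]
  intro a
  rw [hρ a, div_le_iff₀ (hD a)]
  have hk := key a
  rw [hfixval, hlin a] at hk
  linarith
end
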